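/- Let M be a linearly ordered set, let cl₀ be a pregeometry (closure operator with monotonicity, idempotence, finite character, and the exchange property) on M, and let 'short' be a predicate on pairs b ≤ c of elements of M satisfying: (S1) if short(b, c) and b ≤ b' ≤ c' ≤ c then short(b', c'); (S2) for every short pair b ≤ c and every x with b ≤ x ≤ c, there exist b' ≤ b and c' ≥ c with b', c' ∈ cl₀({x}) and short(b', c'). Define scl(A) = {x ∈ M : ∃ b, c ∈ cl₀(A), b ≤ x ≤ c and short(b, c)} ∪ cl₀(A). Assume moreover that scl is idempotent: scl(scl(A)) = scl(A) for all A. Then scl satisfies the exchange property: if x ∈ scl(A ∪ {y}) and x ∉ scl(A), then y ∈ scl(A ∪ {x}). -/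
import Mathlib


/-- The short closure: `x ∈ scl A` iff `x ∈ cl A` or `x` lies in some short
interval with endpoints in `cl A`. -/
def scl {M : Type*} [LinearOrder M] (cl : Set M → Set M) (short : M → M → Prop)
    (A : Set M) : Set M :=
  cl A ∪ {x | ∃ b ∈ cl A, ∃ c ∈ cl A, b ≤ x ∧ x ≤ c ∧ short b c}

/-- If `cl` is a pregeometry, `short` satisfies (S1) and (S2), and `scl` is
idempotent, then `scl` satisfies the exchange property. -/
theorem stmt_9 (M : Type*) [LinearOrder M] (cl : Set M → Set M) (short : M → M → Prop)
    (hsub : ∀ A : Set M, A ⊆ cl A)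
    (hmono : ∀ A B : Set M, A ⊆ B → cl A ⊆ cl B)
    (hidem : ∀ A : Set M, cl (cl A) = cl A)
    (hfin : ∀ (A : Set M) (x : M), x ∈ cl A → ∃ F : Finset M, ↑F ⊆ A ∧ x ∈ cl ↑F)
    (hexch : ∀ (A : Set M) (x y : M), x ∈ cl (A ∪ {y}) → x ∉ cl A → y ∈ cl (A ∪ {x}))
    (hS1 : ∀ b c b' c' : M, short b c → b ≤ b' → b' ≤ c' → c' ≤ c → short b' c')
    (hS2 : ∀ b c x : M, short b c → b ≤ x → x ≤ c →
      ∃ b' c' : M, b' ≤ b ∧ c ≤ c' ∧ b' ∈ cl {x} ∧ c' ∈ cl {x} ∧ short b' c')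
    (hscl_idem : ∀ A : Set M, scl cl short (scl cl short A) = scl cl short A) :
    ∀ (A : Set M) (x y : M),
      x ∈ scl cl short (A ∪ {y}) → x ∉ scl cl short A → y ∈ scl cl short (A ∪ {x}) := by
  intro A x y hx hnx
  have clsub : ∀ B : Set M, cl B ⊆ scl cl short B := fun B => Set.subset_union_left
  have key : ∀ z : M, z ∈ cl (A ∪ {y}) → z ∉ cl A → z ∈ scl cl short (A ∪ {x}) →
      y ∈ scl cl short (A ∪ {x}) := by
    intro z hz hnz hzs
    have hy : y ∈ cl (A ∪ {z}) := hexch A z y hz hnz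
    have hsub2 : A ∪ {z} ⊆ scl cl short (A ∪ {x}) := by
      intro w hw
      rcases hw with hw | hw
      · exact clsub _ (hmono _ _ Set.subset_union_left (hsub A hw))
      · rcases hw; exact hzs
    have hfinal : cl (A ∪ {z}) ⊆ scl cl short (A ∪ {x}) := by
      calc cl (A ∪ {z}) ⊆ cl (scl cl short (A ∪ {x})) := hmono _ _ hsub2
        _ ⊆ scl cl short (scl cl short (A ∪ {x})) := clsub _
        _ = scl cl short (A ∪ {x}) := hscl_idem _
    exact hfinal hy
  rcases hx with hx | ⟨b, hb, c, hc, hbx, hxc, hs⟩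
  · have hnx' : x ∉ cl A := fun h => hnx (clsub _ h)
    exact clsub _ (hexch A x y hx hnx')
  · obtain ⟨b', c', hb'b, hcc', hb'cl, hc'cl, hs'⟩ := hS2 b c x hs hbx hxc
    have hbc : b ≤ c := le_trans hbx hxc
    have hclx : cl {x} ⊆ cl (A ∪ {x}) := hmono _ _ Set.subset_union_right
    have hbscl : b ∈ scl cl short (A ∪ {x}) :=
      Or.inr ⟨b', hclx hb'cl, c', hclx hc'cl, hb'b, le_trans hbc hcc', hs'⟩
    have hcscl : c ∈ scl cl short (A ∪ {x}) :=
      Or.inr ⟨b', hclx hb'cl, c', hclx hc'cl, le_trans hb'b hbc, hcc', hs'⟩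
    by_cases hbA : b ∈ cl A
    · by_cases hcA : c ∈ cl A
      · exact absurd (Or.inr ⟨b, hbA, c, hcA, hbx, hxc, hs⟩) hnx
      · exact key c hc hcA hcscl
    · exact key b hb hbA hbscl
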